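/- For the curve λ ↦ V(λ) = V₁ − 2λV₂ + λ²V₃ with V₁ = ab(a w_y ∂_z − b w_z ∂_y), V₂ = ab(w_y ∂_z − w_z ∂_y), V₃ = b w_y ∂_z − a w_z ∂_y + (a−b)(w_y w_z / w_x)∂_x, one has h(V(λ), V(λ)) = 0 for every λ ∈ ℝ, where h is the metric h = (w_x/(w_y w_z))dx² + (a²w_y/((a−b)²w_x w_z))dy² + (b²w_z/((a−b)²w_x w_y))dz² + 2(a/((a−b)w_z))dx dy − 2(b/((a−b)w_y))dx dz + 2(ab/((a−b)²w_x))dy dz. -/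

import Mathlib

noncomputable section

abbrev Pt3 := Fin 3 → ℝ

/-- Partial derivative in the `j`-th coordinate direction. -/
def pd (j : Fin 3) (f : Pt3 → ℝ) (p : Pt3) : ℝ :=
  fderiv ℝ f p (Pi.single j 1)

/-- The covariant metric of the Weyl structure (1.4), as a matrix of coefficients
in coordinates (x,y,z); off-diagonal entries are half the `2·dx dy` etc. coefficients. -/
def hMat (a b : ℝ) (w : Pt3 → ℝ) (p : Pt3) : Matrix (Fin 3) (Fin 3) ℝ :=
  !![pd 0 w p / (pd 1 w p * pd 2 w p),
      a / ((a - b) * pd 2 w p),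
      -(b / ((a - b) * pd 1 w p));
    a / ((a - b) * pd 2 w p),
      a ^ 2 * pd 1 w p / ((a - b) ^ 2 * pd 0 w p * pd 2 w p),
      a * b / ((a - b) ^ 2 * pd 0 w p);
    -(b / ((a - b) * pd 1 w p)),
      a * b / ((a - b) ^ 2 * pd 0 w p),
      b ^ 2 * pd 2 w p / ((a - b) ^ 2 * pd 0 w p * pd 1 w p)]

/-- Evaluation of the symmetric bilinear form `h` on two tangent vectors. -/
def hEval (a b : ℝ) (w : Pt3 → ℝ) (p : Pt3) (U V : Pt3) : ℝ :=
  ∑ i, ∑ j, U i * hMat a b w p i j * V j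

/-- V₁ = ab(a w_y ∂_z − b w_z ∂_y). -/
def V1 (a b : ℝ) (w : Pt3 → ℝ) (p : Pt3) : Pt3 :=
  ![0, -(a * b * (b * pd 2 w p)), a * b * (a * pd 1 w p)]

/-- V₂ = ab(w_y ∂_z − w_z ∂_y). -/
def V2 (a b : ℝ) (w : Pt3 → ℝ) (p : Pt3) : Pt3 :=
  ![0, -(a * b * pd 2 w p), a * b * pd 1 w p]

/-- V₃ = b w_y ∂_z − a w_z ∂_y + (a−b)(w_y w_z/w_x)∂_x. -/
def V3 (a b : ℝ) (w : Pt3 → ℝ) (p : Pt3) : Pt3 :=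
  ![(a - b) * pd 1 w p * pd 2 w p / pd 0 w p, -(a * pd 2 w p), b * pd 1 w p]

/-- The Veronese curve V(λ) = V₁ − 2λV₂ + λ²V₃. -/
def Vlam (a b : ℝ) (w : Pt3 → ℝ) (lam : ℝ) (p : Pt3) : Pt3 :=
  V1 a b w p - (2 * lam) • V2 a b w p + lam ^ 2 • V3 a b w p

theorem stmt3 (a b : ℝ) (ha : a ≠ 0) (hb : b ≠ 0) (hab : a ≠ b)
    (w : Pt3 → ℝ) (hw : ContDiff ℝ (⊤ : ℕ∞) w) (B : Set Pt3) (hB : IsOpen B)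
    (hwx : ∀ p ∈ B, pd 0 w p ≠ 0) (hwy : ∀ p ∈ B, pd 1 w p ≠ 0)
    (hwz : ∀ p ∈ B, pd 2 w p ≠ 0) :
    ∀ lam : ℝ, ∀ p ∈ B, hEval a b w p (Vlam a b w lam p) (Vlam a b w lam p) = 0 := by
  intro lam p hp
  have hx := hwx p hp; have hy := hwy p hp; have hz := hwz p hp
  have hab' : a - b ≠ 0 := sub_ne_zero.mpr hab
  set X := pd 0 w p; set Y := pd 1 w p; set Z := pd 2 w p
  simp only [hEval, hMat, Vlam, V1, V2, V3, Fin.sum_univ_three]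
  simp only [Pi.add_apply, Pi.sub_apply, Pi.smul_apply, smul_eq_mul,
    Matrix.cons_val', Matrix.cons_val_zero, Matrix.cons_val_one, Matrix.head_cons,
    Matrix.empty_val', Matrix.cons_val_fin_one, Matrix.head_fin_const,
    Matrix.of_apply, Matrix.cons_val_two, Matrix.tail_cons]
  field_simp [show pd 0 w p ≠ 0 from hx, show pd 1 w p ≠ 0 from hy, show pd 2 w p ≠ 0 from hz]
  ring
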